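/- arXiv:1806.08142 — 2 statements merged into one kernel-verified Lean document; each statement's English description precedes it below -/
import Mathlib

section
/- Let π be a Poisson tensor on ℝ^N that does not depend on the variable x_p for some fixed 1 ≤ p ≤ N, and let c be a linear Casimir function for π. Then the 2N×2N antisymmetric matrix field on ℝ^{2N} given in blocks by Π^{xx}(x,y) = 0, Π^{xy}(x,y) = π(x) + c(y)·E_pp, Π^{yx}(x,y) = π(x) − c(y)·E_pp, Π^{yy}(x,y) = ∑_{s=1}^N (∂π/∂x_s)(x) y_s is a Poisson tensor on ℝ^{2N} (denoted Π_{TM,c(y)}). -/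
open scoped ContDiff

/-- Partial derivative `∂f/∂z_s` at `z`, for functions on `ℝ^ι`. -/
noncomputable def pd {ι : Type} [Fintype ι] [DecidableEq ι]
    (s : ι) (f : (ι → ℝ) → ℝ) (x : ι → ℝ) : ℝ :=
  fderiv ℝ f x (Pi.single s 1)

/-- A Poisson tensor on `ℝ^ι`: a smooth antisymmetric matrix field satisfying the
Jacobi condition. -/
def IsPoissonTensor {ι : Type} [Fintype ι] [DecidableEq ι]
    (π : (ι → ℝ) → Matrix ι ι ℝ) : Prop :=
  (∀ i j, ContDiff ℝ ∞ fun x => π x i j) ∧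
  (∀ x i j, π x j i = - π x i j) ∧
  (∀ x i j k, ∑ s, (pd s (fun y => π y i j) x * π x s k
      + pd s (fun y => π y k i) x * π x s j
      + pd s (fun y => π y j k) x * π x s i) = 0)

/-- `c` is a (smooth) Casimir function for `π`. -/
def IsCasimir {ι : Type} [Fintype ι] [DecidableEq ι]
    (π : (ι → ℝ) → Matrix ι ι ℝ) (c : (ι → ℝ) → ℝ) : Prop :=
  ContDiff ℝ ∞ c ∧ ∀ x j, ∑ s, pd s c x * π x s j = 0

/-- The matrix of partial derivatives `(∂π_{ij}/∂x_s)(x)`. -/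
noncomputable def pdMat {N : ℕ} (s : Fin N)
    (π : (Fin N → ℝ) → Matrix (Fin N) (Fin N) ℝ) (x : Fin N → ℝ) :
    Matrix (Fin N) (Fin N) ℝ :=
  Matrix.of fun i j => pd s (fun y => π y i j) x

/-- The `x`-part of a point `z = (x,y) ∈ ℝ^{2N}`. -/
def Xc {N : ℕ} (z : (Fin N ⊕ Fin N) → ℝ) : Fin N → ℝ := fun i => z (Sum.inl i)

/-- The `y`-part of a point `z = (x,y) ∈ ℝ^{2N}`. -/
def Yc {N : ℕ} (z : (Fin N ⊕ Fin N) → ℝ) : Fin N → ℝ := fun i => z (Sum.inr i)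

/-- A linear function `c(x) = ∑ s, a_s x_s`. -/
def IsLinearFun {N : ℕ} (c : (Fin N → ℝ) → ℝ) : Prop :=
  ∃ a : Fin N → ℝ, ∀ x, c x = ∑ s, a s * x s

/-!
The field is `Π₀ + c(y) · (∂_{x_p} ∧ ∂_{y_p})`, where `Π₀` is the tangent lift of `π`.
The Jacobiator of `Π₀` is built from the Jacobiator of `π` and its first derivatives, so `Π₀` is
Poisson; `c(y)` is a Casimir of `Π₀` because the coefficient vector `a` of `c` satisfies
`aᵀπ ≡ 0`, hence also `aᵀ ∂_u π ≡ 0`; and `∂_{x_p}`, `∂_{y_p}` preserve `Π₀` because `π` does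
not depend on `x_p`. Adding `C · (u ∧ v)` to a Poisson tensor, with `C` a Casimir and `u`, `v`
constant symmetries, keeps the Jacobi identity: the cross terms vanish by the Casimir and
symmetry properties, and the quadratic term is `C · (u ∧ v ∧ w)` with `w` in the span of `u`
and `v`.
-/

section PartialDerivative

variable {ι : Type} [Fintype ι] [DecidableEq ι]

lemma pd_eq_zero_of_forall {f : (ι → ℝ) → ℝ} (h : ∀ x, f x = 0) (s : ι) (x : ι → ℝ) :
    pd s f x = 0 := by
  simp [pd, show f = fun _ => 0 from funext h]

lemma pd_add {f g : (ι → ℝ) → ℝ} {x : ι → ℝ} (hf : DifferentiableAt ℝ f x)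
    (hg : DifferentiableAt ℝ g x) (s : ι) :
    pd s (fun y => f y + g y) x = pd s f x + pd s g x := by
  simp [pd, fderiv_fun_add hf hg]

lemma pd_neg (f : (ι → ℝ) → ℝ) (x : ι → ℝ) (s : ι) :
    pd s (fun y => -f y) x = -pd s f x := by
  simp [pd]

lemma pd_mul {f g : (ι → ℝ) → ℝ} {x : ι → ℝ} (hf : DifferentiableAt ℝ f x)
    (hg : DifferentiableAt ℝ g x) (s : ι) :
    pd s (fun y => f y * g y) x = pd s f x * g x + f x * pd s g x := by
  simp [pd, fderiv_fun_mul hf hg]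
  ring

lemma pd_mul_const {f : (ι → ℝ) → ℝ} {x : ι → ℝ} (hf : DifferentiableAt ℝ f x)
    (r : ℝ) (s : ι) : pd s (fun y => f y * r) x = pd s f x * r := by
  simp only [pd]
  rw [fderiv_mul_const hf]
  simp [mul_comm]

lemma pd_const_mul {f : (ι → ℝ) → ℝ} {x : ι → ℝ} (hf : DifferentiableAt ℝ f x)
    (r : ℝ) (s : ι) : pd s (fun y => r * f y) x = r * pd s f x := by
  simp [pd, fderiv_const_mul hf]

lemma pd_sum {α : Type*} {A : Finset α} {f : α → (ι → ℝ) → ℝ} {x : ι → ℝ}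
    (hf : ∀ a ∈ A, DifferentiableAt ℝ (f a) x) (s : ι) :
    pd s (fun y => ∑ a ∈ A, f a y) x = ∑ a ∈ A, pd s (f a) x := by
  simp [pd, fderiv_fun_sum hf]

lemma pd_apply (s t : ι) (x : ι → ℝ) : pd s (fun y => y t) x = (Pi.single s 1 : ι → ℝ) t := by
  simp [pd, (hasFDerivAt_apply t x).fderiv]

lemma pd_linear (a : ι → ℝ) (s : ι) (x : ι → ℝ) : pd s (fun y => ∑ t, a t * y t) x = a s := by
  rw [pd_sum fun t _ => (differentiableAt_apply t x).const_mul (a t)]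
  simp [pd_const_mul (differentiableAt_apply _ x), pd_apply, Pi.single_apply]

lemma pd_comp_clm {κ : Type} [Fintype κ] (L : (ι → ℝ) →L[ℝ] (κ → ℝ)) {f : (κ → ℝ) → ℝ}
    (hf : Differentiable ℝ f) (s : ι) (x : ι → ℝ) :
    pd s (fun y => f (L y)) x = fderiv ℝ f (L x) (L (Pi.single s 1)) := by
  rw [pd, show (fun y => f (L y)) = f ∘ L from rfl, fderiv_comp x (hf _) L.differentiableAt,
    L.fderiv]
  rfl

lemma contDiff_pd {f : (ι → ℝ) → ℝ} (hf : ContDiff ℝ ∞ f) (s : ι) :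
    ContDiff ℝ ∞ (pd s f) :=
  (hf.fderiv_right (by simp)).clm_apply contDiff_const

lemma pd_comm {f : (ι → ℝ) → ℝ} (hf : ContDiff ℝ ∞ f) (s t : ι) (x : ι → ℝ) :
    pd s (pd t f) x = pd t (pd s f) x := by
  have hf' : DifferentiableAt ℝ (fderiv ℝ f) x :=
    (hf.fderiv_right (m := ∞) (by simp)).differentiable (by simp) x
  have hsymm := second_derivative_symmetric (f' := fderiv ℝ f)
    (fun y => (hf.differentiable (by simp) y).hasFDerivAt) hf'.hasFDerivAt
  have second : ∀ a b : ι,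
      pd a (pd b f) x = fderiv ℝ (fderiv ℝ f) x (Pi.single a 1) (Pi.single b 1) := by
    intro a b
    unfold pd
    rw [fderiv_clm_apply hf' (differentiableAt_const _)]
    simp
  rw [second, second, hsymm]

end PartialDerivative

section PoissonTensor

variable {ι : Type} [Fintype ι] [DecidableEq ι]

noncomputable def jacobiator (π : (ι → ℝ) → Matrix ι ι ℝ) (x : ι → ℝ) (i j k : ι) : ℝ :=
  ∑ s, (pd s (fun y => π y i j) x * π x s k
      + pd s (fun y => π y k i) x * π x s j
      + pd s (fun y => π y j k) x * π x s i)

lemma isPoissonTensor_iff (π : (ι → ℝ) → Matrix ι ι ℝ) :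
    IsPoissonTensor π ↔ (∀ i j, ContDiff ℝ ∞ fun x => π x i j) ∧
      (∀ x i j, π x j i = -π x i j) ∧ ∀ x i j k, jacobiator π x i j k = 0 :=
  Iff.rfl

lemma isCasimir_linear_iff {π : (ι → ℝ) → Matrix ι ι ℝ} (a : ι → ℝ) :
    IsCasimir π (fun x => ∑ s, a s * x s) ↔ ∀ x j, ∑ s, a s * π x s j = 0 := by
  simp only [IsCasimir, pd_linear]
  exact ⟨And.right, fun h => ⟨by fun_prop, h⟩⟩

lemma jacobiator_rotate (π : (ι → ℝ) → Matrix ι ι ℝ) (x : ι → ℝ) (i j k : ι) :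
    jacobiator π x i j k = jacobiator π x j k i :=
  Finset.sum_congr rfl fun _ _ => by ring

lemma pd_jacobiator {π : (ι → ℝ) → Matrix ι ι ℝ} (hπ : ∀ i j, ContDiff ℝ ∞ fun x => π x i j)
    (u : ι) (x : ι → ℝ) (i j k : ι) :
    pd u (fun x => jacobiator π x i j k) x
      = ∑ t, (pd t (pd u fun y => π y i j) x * π x t k
          + pd t (fun y => π y i j) x * pd u (fun y => π y t k) x
        + (pd t (pd u fun y => π y k i) x * π x t j
          + pd t (fun y => π y k i) x * pd u (fun y => π y t j) x)
        + (pd t (pd u fun y => π y j k) x * π x t i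
          + pd t (fun y => π y j k) x * pd u (fun y => π y t i) x)) := by
  have hd : ∀ i j, Differentiable ℝ fun x => π x i j :=
    fun i j => (hπ i j).differentiable (by simp)
  have hd' : ∀ t i j, Differentiable ℝ (pd t fun x => π x i j) :=
    fun t i j => (contDiff_pd (hπ i j) t).differentiable (by simp)
  have hterm : ∀ t i j k, DifferentiableAt ℝ
      (fun x => pd t (fun y => π y i j) x * π x t k) x :=
    fun t i j k => (hd' t i j x).fun_mul (hd t k x)
  unfold jacobiator
  rw [pd_sum fun t _ => ((hterm t i j k).fun_add (hterm t k i j)).fun_add (hterm t j k i)]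
  refine Finset.sum_congr rfl fun t _ => ?_
  rw [pd_add ((hterm t i j k).fun_add (hterm t k i j)) (hterm t j k i),
    pd_add (hterm t i j k) (hterm t k i j), pd_mul (hd' t i j x) (hd t k x),
    pd_mul (hd' t k i x) (hd t j x), pd_mul (hd' t j k x) (hd t i x),
    pd_comm (hπ i j), pd_comm (hπ k i), pd_comm (hπ j k)]

theorem IsPoissonTensor.add_smul_wedge {π : (ι → ℝ) → Matrix ι ι ℝ} {C : (ι → ℝ) → ℝ}
    {u v : ι → ℝ} (hπ : IsPoissonTensor π) (hC : IsCasimir π C)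
    (hu : ∀ x i j, ∑ s, u s * pd s (fun y => π y i j) x = 0)
    (hv : ∀ x i j, ∑ s, v s * pd s (fun y => π y i j) x = 0) :
    IsPoissonTensor fun x => π x + C x • (Matrix.vecMulVec u v - Matrix.vecMulVec v u) := by
  obtain ⟨hsmooth, hanti, hjac⟩ := (isPoissonTensor_iff π).1 hπ
  obtain ⟨hCsmooth, hcas⟩ := hC
  set Z : Matrix ι ι ℝ := Matrix.vecMulVec u v - Matrix.vecMulVec v u
  have hZ : ∀ i j, Z i j = u i * v j - v i * u j := fun i j => by
    simp [Z, Matrix.vecMulVec_apply]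
  have hpd : ∀ x s i j, pd s (fun y => (π y + C y • Z) i j) x
      = pd s (fun y => π y i j) x + pd s C x * Z i j := fun x s i j => by
    simp only [Matrix.add_apply, Matrix.smul_apply, smul_eq_mul]
    rw [pd_add ((hsmooth i j).differentiable (by simp) x)
      ((hCsmooth.differentiable (by simp) x).mul_const _), pd_mul_const
      (hCsmooth.differentiable (by simp) x)]
  refine (isPoissonTensor_iff _).2 ⟨fun i j => ?_, fun x i j => ?_, fun x i j k => ?_⟩
  · simpa only [Matrix.add_apply, Matrix.smul_apply, smul_eq_mul] using
      (hsmooth i j).add (hCsmooth.mul contDiff_const)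
  · simp only [Matrix.add_apply, Matrix.smul_apply, smul_eq_mul, hanti x i j, hZ]
    ring
  · set D : (ι → ℝ) → ι → ι → ℝ := fun w i j => ∑ s, w s * pd s (fun y => π y i j) x
    set dC : (ι → ℝ) → ℝ := fun w => ∑ s, pd s C x * w s
    have expand : jacobiator (fun y => π y + C y • Z) x i j k
        = jacobiator π x i j k
          + C x * (v k * D u i j - u k * D v i j + v j * D u k i - u j * D v k i
            + v i * D u j k - u i * D v j k)
          + (Z i j * ∑ s, pd s C x * π x s k + Z k i * ∑ s, pd s C x * π x s j
            + Z j k * ∑ s, pd s C x * π x s i)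
          + C x * (Z i j * (dC u * v k - dC v * u k) + Z k i * (dC u * v j - dC v * u j)
            + Z j k * (dC u * v i - dC v * u i)) := by
      simp only [jacobiator, hpd]
      simp only [D, dC, Finset.mul_sum, Finset.sum_mul, ← Finset.sum_add_distrib,
        ← Finset.sum_sub_distrib, Matrix.add_apply, Matrix.smul_apply, smul_eq_mul]
      refine Finset.sum_congr rfl fun s _ => ?_
      simp only [hZ]
      ring
    rw [expand, hjac, hcas, hcas, hcas]
    simp only [D, hu, hv, hZ]
    ring

end PoissonTensor

noncomputable def XcCLM (N : ℕ) : ((Fin N ⊕ Fin N) → ℝ) →L[ℝ] (Fin N → ℝ) :=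
  ContinuousLinearMap.pi fun i => ContinuousLinearMap.proj (Sum.inl i)

section Projections

variable {N : ℕ}

lemma contDiff_comp_Xc {f : (Fin N → ℝ) → ℝ} (hf : ContDiff ℝ ∞ f) :
    ContDiff ℝ ∞ fun z : (Fin N ⊕ Fin N) → ℝ => f (Xc z) :=
  hf.comp (XcCLM N).contDiff

lemma differentiable_Yc_apply (u : Fin N) :
    Differentiable ℝ fun z : (Fin N ⊕ Fin N) → ℝ => Yc z u :=
  differentiable_apply _

variable {f : (Fin N → ℝ) → ℝ}

lemma Differentiable.comp_Xc (hf : Differentiable ℝ f) :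
    Differentiable ℝ fun z : (Fin N ⊕ Fin N) → ℝ => f (Xc z) :=
  hf.comp (XcCLM N).differentiable

lemma pd_inl_comp_Xc (hf : Differentiable ℝ f) (t : Fin N) (z : (Fin N ⊕ Fin N) → ℝ) :
    pd (Sum.inl t) (fun z => f (Xc z)) z = pd t f (Xc z) := by
  rw [show Xc = XcCLM N from rfl, pd_comp_clm _ hf]
  congr 1
  funext i
  simp [XcCLM, Pi.single_apply]

lemma pd_inr_comp_Xc (hf : Differentiable ℝ f) (t : Fin N) (z : (Fin N ⊕ Fin N) → ℝ) :
    pd (Sum.inr t) (fun z => f (Xc z)) z = 0 := by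
  rw [show Xc = XcCLM N from rfl, pd_comp_clm _ hf]
  convert (fderiv ℝ f (XcCLM N z)).map_zero
  funext i
  simp [XcCLM]

lemma pd_inl_sum_Yc_mul {g : Fin N → (Fin N → ℝ) → ℝ} (hg : ∀ u, Differentiable ℝ (g u))
    (t : Fin N) (z : (Fin N ⊕ Fin N) → ℝ) :
    pd (Sum.inl t) (fun z => ∑ u, Yc z u * g u (Xc z)) z = ∑ u, Yc z u * pd t (g u) (Xc z) := by
  rw [pd_sum fun u _ => (differentiable_Yc_apply u z).fun_mul ((hg u).comp_Xc z)]
  refine Finset.sum_congr rfl fun u _ => ?_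
  rw [pd_mul (differentiable_Yc_apply u z) ((hg u).comp_Xc z)]
  simp [Yc, pd_apply, pd_inl_comp_Xc (hg u)]

lemma pd_inr_sum_Yc_mul {g : Fin N → (Fin N → ℝ) → ℝ} (hg : ∀ u, Differentiable ℝ (g u))
    (t : Fin N) (z : (Fin N ⊕ Fin N) → ℝ) :
    pd (Sum.inr t) (fun z => ∑ u, Yc z u * g u (Xc z)) z = g t (Xc z) := by
  rw [pd_sum fun u _ => (differentiable_Yc_apply u z).fun_mul ((hg u).comp_Xc z)]
  have hterm : ∀ u, pd (Sum.inr t) (fun z => Yc z u * g u (Xc z)) z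
      = (Pi.single t 1 : Fin N → ℝ) u * g u (Xc z) := fun u => by
    rw [pd_mul (differentiable_Yc_apply u z) ((hg u).comp_Xc z)]
    simp [Yc, pd_apply, pd_inr_comp_Xc (hg u), Pi.single_apply]
  simp [hterm, Pi.single_apply]

end Projections

section TangentLift

variable {N : ℕ}

noncomputable def tangentLift (π : (Fin N → ℝ) → Matrix (Fin N) (Fin N) ℝ)
    (z : (Fin N ⊕ Fin N) → ℝ) : Matrix (Fin N ⊕ Fin N) (Fin N ⊕ Fin N) ℝ :=
  Matrix.fromBlocks 0 (π (Xc z)) (π (Xc z)) (∑ s, Yc z s • pdMat s π (Xc z))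

variable {π : (Fin N → ℝ) → Matrix (Fin N) (Fin N) ℝ}

section Entries

variable (z : (Fin N ⊕ Fin N) → ℝ) (i j : Fin N)

@[simp] lemma tangentLift_inl_inl : tangentLift π z (.inl i) (.inl j) = 0 := rfl

@[simp] lemma tangentLift_inl_inr : tangentLift π z (.inl i) (.inr j) = π (Xc z) i j := rfl

@[simp] lemma tangentLift_inr_inl : tangentLift π z (.inr i) (.inl j) = π (Xc z) i j := rfl

@[simp] lemma tangentLift_inr_inr :
    tangentLift π z (.inr i) (.inr j) = ∑ u, Yc z u * pd u (fun y => π y i j) (Xc z) := by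
  simp [tangentLift, Matrix.sum_apply, pdMat]

end Entries

lemma jacobiator_tangentLift_inl_inl (hπ : ∀ i j, Differentiable ℝ fun x => π x i j)
    (z : (Fin N ⊕ Fin N) → ℝ) (i j : Fin N) (c : Fin N ⊕ Fin N) :
    jacobiator (tangentLift π) z (.inl i) (.inl j) c = 0 := by
  rcases c with k | k
  · simp [jacobiator, pd_eq_zero_of_forall]
  · simp [jacobiator, Fintype.sum_sum_type, pd_eq_zero_of_forall, pd_inr_comp_Xc (hπ _ _)]

lemma jacobiator_tangentLift_inl_inr_inr (hπ : ∀ i j, ContDiff ℝ ∞ fun x => π x i j)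
    (z : (Fin N ⊕ Fin N) → ℝ) (i j k : Fin N) :
    jacobiator (tangentLift π) z (.inl i) (.inr j) (.inr k) = jacobiator π (Xc z) i j k := by
  have hd i j : Differentiable ℝ fun x => π x i j := (hπ i j).differentiable (by simp)
  have hd' t i j : Differentiable ℝ (pd t fun x => π x i j) :=
    (contDiff_pd (hπ i j) t).differentiable (by simp)
  simp [jacobiator, Fintype.sum_sum_type, pd_inl_comp_Xc (hd _ _), pd_inr_comp_Xc (hd _ _),
    pd_inr_sum_Yc_mul fun u => hd' u _ _, Finset.sum_add_distrib]

lemma jacobiator_tangentLift_inr_inr_inr (hπ : ∀ i j, ContDiff ℝ ∞ fun x => π x i j)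
    (z : (Fin N ⊕ Fin N) → ℝ) (i j k : Fin N) :
    jacobiator (tangentLift π) z (.inr i) (.inr j) (.inr k)
      = ∑ u, Yc z u * pd u (fun x => jacobiator π x i j k) (Xc z) := by
  have hd' t i j : Differentiable ℝ (pd t fun x => π x i j) :=
    (contDiff_pd (hπ i j) t).differentiable (by simp)
  simp only [pd_jacobiator hπ]
  simp only [jacobiator, Fintype.sum_sum_type, tangentLift_inr_inr, tangentLift_inl_inr,
    pd_inl_sum_Yc_mul fun u => hd' u _ _, pd_inr_sum_Yc_mul fun u => hd' u _ _, Finset.mul_sum,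
    Finset.sum_mul, ← Finset.sum_add_distrib]
  rw [Finset.sum_comm]
  exact Finset.sum_congr rfl fun u _ => Finset.sum_congr rfl fun t _ => by ring

theorem isPoissonTensor_tangentLift (hπ : IsPoissonTensor π) :
    IsPoissonTensor (tangentLift π) := by
  obtain ⟨hsmooth, hanti, hjac⟩ := (isPoissonTensor_iff π).1 hπ
  have hd i j : Differentiable ℝ fun x => π x i j := (hsmooth i j).differentiable (by simp)
  have hxyy z i j k : jacobiator (tangentLift π) z (.inl i) (.inr j) (.inr k) = 0 := by
    rw [jacobiator_tangentLift_inl_inr_inr hsmooth, hjac]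
  refine (isPoissonTensor_iff _).2 ⟨?_, ?_, ?_⟩
  · rintro (i | i) (j | j) <;> simp only [tangentLift_inl_inl, tangentLift_inl_inr,
      tangentLift_inr_inl, tangentLift_inr_inr]
    · exact contDiff_const
    · exact contDiff_comp_Xc (hsmooth i j)
    · exact contDiff_comp_Xc (hsmooth i j)
    · exact ContDiff.sum fun u _ =>
        (contDiff_apply ℝ ℝ (Sum.inr u)).mul (contDiff_comp_Xc (contDiff_pd (hsmooth i j) u))
  · rintro z (i | i) (j | j)
    · simp
    · simp [hanti (Xc z) i j]
    · simp [hanti (Xc z) i j]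
    · simp only [tangentLift_inr_inr, funext fun y => hanti y i j, pd_neg,
        ← Finset.sum_neg_distrib]
      simp
  · rintro z (i | i) (j | j) (k | k)
    · exact jacobiator_tangentLift_inl_inl hd z i j _
    · exact jacobiator_tangentLift_inl_inl hd z i j _
    · rw [jacobiator_rotate, jacobiator_rotate]
      exact jacobiator_tangentLift_inl_inl hd z k i _
    · exact hxyy z i j k
    · rw [jacobiator_rotate]
      exact jacobiator_tangentLift_inl_inl hd z j k _
    · rw [jacobiator_rotate]
      exact hxyy z j k i
    · rw [jacobiator_rotate, jacobiator_rotate]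
      exact hxyy z k i j
    · rw [jacobiator_tangentLift_inr_inr_inr hsmooth]
      simp [pd_eq_zero_of_forall fun x => hjac x i j k]

lemma pd_inl_tangentLift_eq_zero (hπ : ∀ i j, ContDiff ℝ ∞ fun x => π x i j) {p : Fin N}
    (hp : ∀ x i j, pd p (fun y => π y i j) x = 0) (z : (Fin N ⊕ Fin N) → ℝ)
    (a b : Fin N ⊕ Fin N) : pd (.inl p) (fun z => tangentLift π z a b) z = 0 := by
  have hd i j : Differentiable ℝ fun x => π x i j := (hπ i j).differentiable (by simp)
  rcases a with i | i <;> rcases b with j | j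
  · simp [pd_eq_zero_of_forall]
  · simpa [hp] using pd_inl_comp_Xc (hd i j) p z
  · simpa [hp] using pd_inl_comp_Xc (hd i j) p z
  · rw [funext (tangentLift_inr_inr (π := π) · i j),
      pd_inl_sum_Yc_mul fun u => (contDiff_pd (hπ i j) u).differentiable (by simp)]
    simp [pd_comm (hπ i j) p, pd_eq_zero_of_forall fun x => hp x i j]

lemma pd_inr_tangentLift_eq_zero (hπ : ∀ i j, ContDiff ℝ ∞ fun x => π x i j) {p : Fin N}
    (hp : ∀ x i j, pd p (fun y => π y i j) x = 0) (z : (Fin N ⊕ Fin N) → ℝ)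
    (a b : Fin N ⊕ Fin N) : pd (.inr p) (fun z => tangentLift π z a b) z = 0 := by
  have hd i j : Differentiable ℝ fun x => π x i j := (hπ i j).differentiable (by simp)
  rcases a with i | i <;> rcases b with j | j
  · simp [pd_eq_zero_of_forall]
  · simpa using pd_inr_comp_Xc (hd i j) p z
  · simpa using pd_inr_comp_Xc (hd i j) p z
  · rw [funext (tangentLift_inr_inr (π := π) · i j),
      pd_inr_sum_Yc_mul fun u => (contDiff_pd (hπ i j) u).differentiable (by simp)]
    exact hp _ i j

lemma isCasimir_tangentLift_linear (hπ : ∀ i j, Differentiable ℝ fun x => π x i j)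
    {a : Fin N → ℝ} (ha : ∀ x j, ∑ s, a s * π x s j = 0) :
    IsCasimir (tangentLift π) fun z => ∑ s, Sum.elim (0 : Fin N → ℝ) a s * z s := by
  refine (isCasimir_linear_iff _).2 ?_
  rintro z (k | k)
  · simp [Fintype.sum_sum_type, ha]
  · simp only [Fintype.sum_sum_type, Sum.elim_inl, Pi.zero_apply, zero_mul,
      Finset.sum_const_zero, zero_add, Sum.elim_inr, tangentLift_inr_inr]
    calc ∑ t, a t * ∑ u, Yc z u * pd u (fun x => π x t k) (Xc z)
        = ∑ u, Yc z u * pd u (fun x => ∑ t, a t * π x t k) (Xc z) := by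
          simp only [pd_sum fun t _ => ((hπ t k).const_mul (a t)).differentiableAt,
            pd_const_mul (hπ _ k _), Finset.mul_sum]
          rw [Finset.sum_comm]
          exact Finset.sum_congr rfl fun u _ => Finset.sum_congr rfl fun t _ => by ring
      _ = 0 := by simp [pd_eq_zero_of_forall fun x => ha x k]

end TangentLift

theorem stmt4_general {N : ℕ}
    (π : (Fin N → ℝ) → Matrix (Fin N) (Fin N) ℝ) (hπ : IsPoissonTensor π)
    (p : Fin N) (hp : ∀ x i j, pd p (fun y => π y i j) x = 0)
    (c : (Fin N → ℝ) → ℝ) (hc : IsCasimir π c) (hclin : IsLinearFun c) :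
    IsPoissonTensor (fun z : (Fin N ⊕ Fin N) → ℝ =>
      Matrix.fromBlocks
        0
        (π (Xc z) + c (Yc z) • Matrix.single p p (1 : ℝ))
        (π (Xc z) - c (Yc z) • Matrix.single p p (1 : ℝ))
        (∑ s, Yc z s • pdMat s π (Xc z))) := by
  obtain ⟨a, ha⟩ := hclin
  obtain rfl : c = fun x => ∑ s, a s * x s := funext ha
  have hsmooth := hπ.1
  have hdeformed := (isPoissonTensor_tangentLift hπ).add_smul_wedge
    (isCasimir_tangentLift_linear (fun i j => (hsmooth i j).differentiable (by simp))
      ((isCasimir_linear_iff a).1 hc))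
    (u := Pi.single (.inl p) 1) (v := Pi.single (.inr p) 1)
    (fun z a b => by simp [Pi.single_apply, pd_inl_tangentLift_eq_zero hsmooth hp])
    (fun z a b => by simp [Pi.single_apply, pd_inr_tangentLift_eq_zero hsmooth hp])
  convert hdeformed using 1
  funext z
  ext (i | i) (j | j) <;>
    simp [tangentLift, Matrix.vecMulVec_apply, Matrix.single_apply, Pi.single_apply, ite_and,
      @eq_comm _ p, sub_eq_add_neg, Fintype.sum_sum_type, Yc] <;>
    split_ifs <;> rfl

/-- the deformed tangent lift `Π_{TM,c(y)}` (with a linear Casimir `c`)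
is a Poisson tensor on `ℝ^{2N}`. -/
theorem stmt4 {N : ℕ} (hN : 1 ≤ N)
    (π : (Fin N → ℝ) → Matrix (Fin N) (Fin N) ℝ) (hπ : IsPoissonTensor π)
    (p : Fin N) (hp : ∀ x i j, pd p (fun y => π y i j) x = 0)
    (c : (Fin N → ℝ) → ℝ) (hc : IsCasimir π c) (hclin : IsLinearFun c) :
    IsPoissonTensor (fun z : (Fin N ⊕ Fin N) → ℝ =>
      Matrix.fromBlocks
        0
        (π (Xc z) + c (Yc z) • Matrix.single p p (1 : ℝ))
        (π (Xc z) - c (Yc z) • Matrix.single p p (1 : ℝ))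
        (∑ s, Yc z s • pdMat s π (Xc z))) :=
  stmt4_general π hπ p hp c hc hclin
end

section
/- Let π be a linear Poisson tensor on ℝ^N that does not depend on the variable x_p for some fixed 1 ≤ p ≤ N, let λ ≥ 0, let c be a linear Casimir function for π, and let c' be a Casimir function for π with ∂c'/∂x_p ≡ 0. Then the functions on ℝ^{2N} given by F₁(x,y) = c'(x − √λ·y) + c'(x + √λ·y) and F₂(x,y) = c'(x − √λ·y) − c'(x + √λ·y) are Casimir functions both for the Poisson tensor with blocks Π^{xx}=λπ(y), Π^{xy}=π(x)+c(x)E_pp, Π^{yx}=π(x)−c(x)E_pp, Π^{yy}=π(y), and for the Poisson tensor with the same blocks except c(y) replaces c(x). -/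
open scoped ContDiff

/-- A linear (Lie–Poisson) tensor: `π_{ij}(x) = ∑ n, c^n_{ij} x_n`. -/
def IsLinearTensor {N : ℕ} (π : (Fin N → ℝ) → Matrix (Fin N) (Fin N) ℝ) : Prop :=
  ∃ C : Fin N → Fin N → Fin N → ℝ, ∀ x i j, π x i j = ∑ n, C i j n * x n

/-- The tensor `[[λπ(y), π(x)+c(x)E_pp],[π(x)−c(x)E_pp, π(y)]]` on `ℝ^{2N}`. -/
noncomputable def tensorTTX {N : ℕ} (π : (Fin N → ℝ) → Matrix (Fin N) (Fin N) ℝ)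
    (p : Fin N) (c : (Fin N → ℝ) → ℝ) (lam : ℝ) (z : (Fin N ⊕ Fin N) → ℝ) :
    Matrix (Fin N ⊕ Fin N) (Fin N ⊕ Fin N) ℝ :=
  Matrix.fromBlocks
    (lam • π (Yc z))
    (π (Xc z) + c (Xc z) • Matrix.single p p (1 : ℝ))
    (π (Xc z) - c (Xc z) • Matrix.single p p (1 : ℝ))
    (π (Yc z))

/-- The tensor `[[λπ(y), π(x)+c(y)E_pp],[π(x)−c(y)E_pp, π(y)]]` on `ℝ^{2N}`. -/
noncomputable def tensorTTY {N : ℕ} (π : (Fin N → ℝ) → Matrix (Fin N) (Fin N) ℝ)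
    (p : Fin N) (c : (Fin N → ℝ) → ℝ) (lam : ℝ) (z : (Fin N ⊕ Fin N) → ℝ) :
    Matrix (Fin N ⊕ Fin N) (Fin N ⊕ Fin N) ℝ :=
  Matrix.fromBlocks
    (lam • π (Yc z))
    (π (Xc z) + c (Yc z) • Matrix.single p p (1 : ℝ))
    (π (Xc z) - c (Yc z) • Matrix.single p p (1 : ℝ))
    (π (Yc z))

/-! With `g = ∇c'(x + t y)`, the function `z ↦ c'(x + t y)` on `ℝ^{2N}` has gradient `(g, t g)`.
Against the block tensor, its `y`-column is `g ⬝ π(x + t y)` and, once `t² = λ`, its `x`-column is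
`t (g ⬝ π(x + t y))`: both vanish because `π` is linear and `c'` is a Casimir function, while the
`c E_pp` corrections only meet `∂c'/∂x_p = 0`. Taking `t = ∓√λ`,
`F₁` and `F₂` are a sum and a difference of two such Casimir functions. -/

open Matrix

section Casimir

variable {ι : Type} [Fintype ι] [DecidableEq ι]

noncomputable def grad (f : (ι → ℝ) → ℝ) (x : ι → ℝ) : ι → ℝ := fun s => pd s f x

theorem isCasimir_iff_vecMul {π : (ι → ℝ) → Matrix ι ι ℝ} {f : (ι → ℝ) → ℝ} :
    IsCasimir π f ↔ ContDiff ℝ ∞ f ∧ ∀ x, grad f x ᵥ* π x = 0 := by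
  simp only [IsCasimir, funext_iff, vecMul, dotProduct, grad, Pi.zero_apply]

theorem grad_add {f g : (ι → ℝ) → ℝ} {x : ι → ℝ} (hf : DifferentiableAt ℝ f x)
    (hg : DifferentiableAt ℝ g x) : grad (fun x => f x + g x) x = grad f x + grad g x := by
  ext s
  simp [grad, pd, fderiv_fun_add hf hg]

theorem grad_sub {f g : (ι → ℝ) → ℝ} {x : ι → ℝ} (hf : DifferentiableAt ℝ f x)
    (hg : DifferentiableAt ℝ g x) : grad (fun x => f x - g x) x = grad f x - grad g x := by
  ext s
  simp [grad, pd, fderiv_fun_sub hf hg]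

variable {π : (ι → ℝ) → Matrix ι ι ℝ} {f g : (ι → ℝ) → ℝ}

theorem IsCasimir.add (hf : IsCasimir π f) (hg : IsCasimir π g) :
    IsCasimir π (fun x => f x + g x) := by
  rw [isCasimir_iff_vecMul] at *
  refine ⟨hf.1.add hg.1, fun x => ?_⟩
  rw [grad_add (hf.1.differentiable (by simp) x) (hg.1.differentiable (by simp) x), add_vecMul,
    hf.2, hg.2, add_zero]

theorem IsCasimir.sub (hf : IsCasimir π f) (hg : IsCasimir π g) :
    IsCasimir π (fun x => f x - g x) := by
  rw [isCasimir_iff_vecMul] at *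
  refine ⟨hf.1.sub hg.1, fun x => ?_⟩
  rw [grad_sub (hf.1.differentiable (by simp) x) (hg.1.differentiable (by simp) x), sub_vecMul,
    hf.2, hg.2, sub_zero]

end Casimir

theorem grad_comp_clm {ι κ : Type} [Fintype ι] [DecidableEq ι] [Fintype κ] [DecidableEq κ]
    {f : (κ → ℝ) → ℝ} (L : (ι → ℝ) →L[ℝ] (κ → ℝ)) {x : ι → ℝ}
    (hf : DifferentiableAt ℝ f (L x)) (s : ι) : grad (fun x => f (L x)) x s = fderiv ℝ f (L x) (L (Pi.single s 1)) := by
  simp [grad, pd, fderiv_fun_comp x hf L.differentiableAt, L.fderiv]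

theorem vecMul_single_self_eq_zero {ι R : Type*} [Fintype ι] [DecidableEq ι] [Semiring R]
    {v : ι → R} {p : ι} (hv : v p = 0) (a : R) : v ᵥ* single p p a = 0 := by
  ext j
  simp [vecMul, dotProduct, single_apply, ite_and, hv]

theorem IsLinearTensor.map_add_smul {N : ℕ} {π : (Fin N → ℝ) → Matrix (Fin N) (Fin N) ℝ}
    (hπ : IsLinearTensor π) (x y : Fin N → ℝ) (t : ℝ) : π (x + t • y) = π x + t • π y := by
  obtain ⟨C, hC⟩ := hπ
  ext i j
  rw [Matrix.add_apply, Matrix.smul_apply, hC, hC, hC, smul_eq_mul, Finset.mul_sum,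
    ← Finset.sum_add_distrib]
  refine Finset.sum_congr rfl fun n _ => ?_
  simp only [Pi.add_apply, Pi.smul_apply, smul_eq_mul]
  ring

section Shear

variable {N : ℕ}

noncomputable def shear (t : ℝ) : ((Fin N ⊕ Fin N) → ℝ) →L[ℝ] (Fin N → ℝ) :=
  ContinuousLinearMap.pi fun i =>
    ContinuousLinearMap.proj (Sum.inl i) + t • ContinuousLinearMap.proj (Sum.inr i)

theorem shear_apply (t : ℝ) (z : (Fin N ⊕ Fin N) → ℝ) : shear t z = Xc z + t • Yc z := rfl

theorem grad_comp_shear {f : (Fin N → ℝ) → ℝ} (hf : Differentiable ℝ f) (t : ℝ)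
    (z : (Fin N ⊕ Fin N) → ℝ) :
    grad (fun z => f (Xc z + t • Yc z)) z =
      Sum.elim (grad f (Xc z + t • Yc z)) (t • grad f (Xc z + t • Yc z)) := by
  change grad (fun z => f (shear t z)) z = _
  ext (s | s) <;> rw [grad_comp_clm (shear t) (hf _)]
  · have : shear t (Pi.single (Sum.inl s) 1) = Pi.single s (1 : ℝ) := by
      ext i; simp [shear_apply, Xc, Yc, Pi.single_apply]
    rw [this]; rfl
  · have : shear t (Pi.single (Sum.inr s) 1) = t • Pi.single s (1 : ℝ) := by
      ext i; simp [shear_apply, Xc, Yc, Pi.single_apply]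
    rw [this, map_smul]; rfl

end Shear

noncomputable def blockTensor {N : ℕ} (π : (Fin N → ℝ) → Matrix (Fin N) (Fin N) ℝ) (p : Fin N)
    (d : ((Fin N ⊕ Fin N) → ℝ) → ℝ) (lam : ℝ) (z : (Fin N ⊕ Fin N) → ℝ) :
    Matrix (Fin N ⊕ Fin N) (Fin N ⊕ Fin N) ℝ :=
  fromBlocks (lam • π (Yc z)) (π (Xc z) + d z • single p p 1)
    (π (Xc z) - d z • single p p 1) (π (Yc z))

theorem IsCasimir.blockTensor_comp_shear {N : ℕ} {π : (Fin N → ℝ) → Matrix (Fin N) (Fin N) ℝ}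
    {f : (Fin N → ℝ) → ℝ} {p : Fin N} (hπ : IsLinearTensor π) (hf : IsCasimir π f)
    (hfp : ∀ x, pd p f x = 0) (d : ((Fin N ⊕ Fin N) → ℝ) → ℝ) {t lam : ℝ} (ht : t * t = lam) :
    IsCasimir (blockTensor π p d lam) (fun z => f (Xc z + t • Yc z)) := by
  rw [isCasimir_iff_vecMul] at hf ⊢
  refine ⟨hf.1.comp (shear t).contDiff, fun z => ?_⟩
  rw [grad_comp_shear (hf.1.differentiable (by simp)), blockTensor, vecMul_fromBlocks,
    ← Sum.elim_zero_zero]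
  set g := grad f (Xc z + t • Yc z)
  have hg : g ᵥ* π (Xc z) + t • g ᵥ* π (Yc z) = 0 := by
    rw [← vecMul_smul, ← vecMul_add, ← hπ.map_add_smul]; exact hf.2 _
  have hgp : g ᵥ* single p p 1 = 0 := vecMul_single_self_eq_zero (v := g) (hfp _) 1
  simp only [Sum.elim_comp_inl, Sum.elim_comp_inr, vecMul_add, vecMul_sub, vecMul_smul,
    smul_vecMul, hgp, smul_zero, add_zero, sub_zero, ← ht]
  exact congrArg₂ Sum.elim (by linear_combination (norm := module) t • hg) hg

theorem stmt13_general {N : ℕ}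
    (π : (Fin N → ℝ) → Matrix (Fin N) (Fin N) ℝ)
    (hlin : IsLinearTensor π)
    (p : Fin N)
    (lam : ℝ) (hlam : 0 ≤ lam)
    (c : (Fin N → ℝ) → ℝ)
    (c' : (Fin N → ℝ) → ℝ) (hc' : IsCasimir π c')
    (hc'p : ∀ x, pd p c' x = 0) :
    IsCasimir (tensorTTX π p c lam)
      (fun z => c' (Xc z - Real.sqrt lam • Yc z) + c' (Xc z + Real.sqrt lam • Yc z)) ∧
    IsCasimir (tensorTTX π p c lam)
      (fun z => c' (Xc z - Real.sqrt lam • Yc z) - c' (Xc z + Real.sqrt lam • Yc z)) ∧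
    IsCasimir (tensorTTY π p c lam)
      (fun z => c' (Xc z - Real.sqrt lam • Yc z) + c' (Xc z + Real.sqrt lam • Yc z)) ∧
    IsCasimir (tensorTTY π p c lam)
      (fun z => c' (Xc z - Real.sqrt lam • Yc z) - c' (Xc z + Real.sqrt lam • Yc z)) := by
  have hsqrt : √lam * √lam = lam := Real.mul_self_sqrt hlam
  have hsqrt_neg : -√lam * -√lam = lam := by rw [neg_mul_neg, hsqrt]
  have hshears (d : ((Fin N ⊕ Fin N) → ℝ) → ℝ) :
      IsCasimir (blockTensor π p d lam) (fun z => c' (Xc z - √lam • Yc z)) ∧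
        IsCasimir (blockTensor π p d lam) (fun z => c' (Xc z + √lam • Yc z)) :=
    ⟨by simpa only [neg_smul, ← sub_eq_add_neg] using
        hc'.blockTensor_comp_shear hlin hc'p d hsqrt_neg,
      hc'.blockTensor_comp_shear hlin hc'p d hsqrt⟩
  obtain ⟨hXm, hXp⟩ := hshears fun z => c (Xc z)
  obtain ⟨hYm, hYp⟩ := hshears fun z => c (Yc z)
  exact ⟨hXm.add hXp, hXm.sub hXp, hYm.add hYp, hYm.sub hYp⟩

/-- `F₁(x,y) = c'(x−√λ y) + c'(x+√λ y)` and
`F₂(x,y) = c'(x−√λ y) − c'(x+√λ y)` are Casimir functions for both tensors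
`[[λπ(y), π(x)±c(x)E_pp],[…, π(y)]]` and `[[λπ(y), π(x)±c(y)E_pp],[…, π(y)]]`. -/
theorem stmt13 {N : ℕ} (hN : 1 ≤ N)
    (π : (Fin N → ℝ) → Matrix (Fin N) (Fin N) ℝ)
    (hπ : IsPoissonTensor π) (hlin : IsLinearTensor π)
    (p : Fin N) (hp : ∀ x i j, pd p (fun y => π y i j) x = 0)
    (lam : ℝ) (hlam : 0 ≤ lam)
    (c : (Fin N → ℝ) → ℝ) (hc : IsCasimir π c) (hclin : IsLinearFun c)
    (c' : (Fin N → ℝ) → ℝ) (hc' : IsCasimir π c')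
    (hc'p : ∀ x, pd p c' x = 0) :
    IsCasimir (tensorTTX π p c lam)
      (fun z => c' (Xc z - Real.sqrt lam • Yc z) + c' (Xc z + Real.sqrt lam • Yc z)) ∧
    IsCasimir (tensorTTX π p c lam)
      (fun z => c' (Xc z - Real.sqrt lam • Yc z) - c' (Xc z + Real.sqrt lam • Yc z)) ∧
    IsCasimir (tensorTTY π p c lam)
      (fun z => c' (Xc z - Real.sqrt lam • Yc z) + c' (Xc z + Real.sqrt lam • Yc z)) ∧
    IsCasimir (tensorTTY π p c lam)
      (fun z => c' (Xc z - Real.sqrt lam • Yc z) - c' (Xc z + Real.sqrt lam • Yc z)) :=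
  stmt13_general π hlin p lam hlam c c' hc' hc'p
end
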